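/- Let p and q be odd integers with 5 ≤ p ≤ q. Then the presented group Γ_{2(p+q)+1}(p,q) is isomorphic to the presented group H⁺(p,q) on generators a,b,α,β with relators α^{-1}a^{(p-1)/2}, β^{-1}b^{(q-1)/2}, βαbαβ(aβ)^2(αb)^2, and αβaβα(aβ)^2(αb)^2. -/
import Mathlib

set_option maxHeartbeats 1000000




/-- The relators of the presented group `Γ_s(p,q)`, the fundamental group of `s`-surgery
on the `(-2,p,q)` pretzel knot (via the Wirtinger presentation), on generators
`x = of 0`, `y = of 1`, `z = of 2`. -/
def pretzelRels (p q s : ℤ) : Set (FreeGroup (Fin 3)) :=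
  let x : FreeGroup (Fin 3) := FreeGroup.of 0
  let y : FreeGroup (Fin 3) := FreeGroup.of 1
  let z : FreeGroup (Fin 3) := FreeGroup.of 2
  let l : FreeGroup (Fin 3) :=
    x ^ (-2 * (p + q)) * (y * x) ^ ((q - 1) / 2) * (y * z⁻¹)⁻¹ * (y * x) ^ ((q + 1) / 2) *
      (z * x) ^ ((p - 1) / 2) * (y * z⁻¹) * (z * x) ^ ((p + 1) / 2)
  { (z * x) ^ ((p - 1) / 2) * z * (z * x) ^ (-((p - 1) / 2)) *
      ((y * x) ^ (-((q + 1) / 2)) * y * (y * x) ^ ((q + 1) / 2))⁻¹,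
    (y * z⁻¹)⁻¹ * y * (y * z⁻¹) *
      ((y * x) ^ (-((q - 1) / 2)) * x * (y * x) ^ ((q - 1) / 2))⁻¹,
    (y * z⁻¹)⁻¹ * z * (y * z⁻¹) *
      ((z * x) ^ ((p + 1) / 2) * x * (z * x) ^ (-((p + 1) / 2)))⁻¹,
    x ^ s * l }

/-- The relators of the group `H⁺(p,q)` on generators
`a = of 0`, `b = of 1`, `α = of 2`, `β = of 3`. -/
def HplusRels (p q : ℤ) : Set (FreeGroup (Fin 4)) :=
  let a : FreeGroup (Fin 4) := FreeGroup.of 0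
  let b : FreeGroup (Fin 4) := FreeGroup.of 1
  let al : FreeGroup (Fin 4) := FreeGroup.of 2
  let be : FreeGroup (Fin 4) := FreeGroup.of 3
  { al⁻¹ * a ^ ((p - 1) / 2), be⁻¹ * b ^ ((q - 1) / 2),
    be * al * b * al * be * (a * be) ^ 2 * (al * b) ^ 2,
    al * be * a * be * al * (a * be) ^ 2 * (al * b) ^ 2 }

private lemma eq_of_conj {G : Type*} [Group G] (c : G) {L R L' R' : G} (h : L' = R')
    (hfree : L * R⁻¹ = c * (L' * R'⁻¹) * c⁻¹) : L = R := by
  rw [← mul_inv_eq_one, hfree, h]; group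

private lemma mk_of {α : Type*} {rels : Set (FreeGroup α)} (i : α) :
    PresentedGroup.mk rels (FreeGroup.of i) = PresentedGroup.of i := rfl

private lemma relation_one {α : Type*} {rels : Set (FreeGroup α)} {r : FreeGroup α}
    (h : r ∈ rels) : PresentedGroup.mk rels r = 1 :=
  (QuotientGroup.eq_one_iff _).mpr (Subgroup.subset_normalClosure h)

private lemma lemHA {G : Type*} [Group G] (a b X : G) (n m : ℤ)
    (hB : a * X * b * a⁻¹ = b ^ (-m) * X⁻¹ * b ^ m)
    (hC : b⁻¹ * a * X * b = a ^ n * X⁻¹ * a ^ (-n)) :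
    a ^ (n + 1) * X * a ^ (-n) = b ^ (-m) * X * b ^ (m + 1) := by
  have e : b ^ (-m) * X⁻¹ * b ^ m * a = b * (a ^ n * X⁻¹ * a ^ (-n)) := by
    rw [← hB, ← hC]; group
  exact eq_of_conj (b ^ (-m) * X * b ^ m) e (by group)

private lemma lemW1 {G : Type*} [Group G] (u v xx : G) (n m : ℤ)
    (hD : v ^ m * u * v ^ m * u ^ n * v * u ^ n = xx⁻¹)
    (hB : u * xx⁻¹ * v * u⁻¹ = v ^ (-m) * xx * v ^ m) :
    v ^ m * u ^ n * v * u ^ n * v ^ m * (u * v ^ m) ^ 2 * (u ^ n * v) ^ 2 = 1 := by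
  have step : v ^ m * u ^ n * v * u ^ n * v ^ m * (u * v ^ m) ^ 2 * (u ^ n * v) ^ 2
      = (v ^ m * u ^ n * v * u ^ n * v ^ m) *
        ((u * (v ^ m * u * v ^ m * u ^ n * v * u ^ n) * v * u⁻¹) *
          (v ^ (-m) * (v ^ m * u * v ^ m * u ^ n * v * u ^ n) * v ^ m)) *
        (v ^ m * u ^ n * v * u ^ n * v ^ m)⁻¹ := by simp only [pow_two]; group
  rw [hD, hB] at step
  rw [step]; group

private lemma lemW2 {G : Type*} [Group G] (u v xx : G) (n m : ℤ)
    (hD : v ^ m * u * v ^ m * u ^ n * v * u ^ n = xx⁻¹)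
    (hC : v⁻¹ * u * xx⁻¹ * v = u ^ n * xx * u ^ (-n)) :
    u ^ n * v ^ m * u * v ^ m * u ^ n * (u * v ^ m) ^ 2 * (u ^ n * v) ^ 2 = 1 := by
  have step : u ^ n * v ^ m * u * v ^ m * u ^ n * (u * v ^ m) ^ 2 * (u ^ n * v) ^ 2
      = (u ^ n * v ^ m * u * v ^ m * u ^ n * v) *
        ((v⁻¹ * u * (v ^ m * u * v ^ m * u ^ n * v * u ^ n) * v) *
          (u ^ n * (v ^ m * u * v ^ m * u ^ n * v * u ^ n) * u ^ (-n))) *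
        (u ^ n * v ^ m * u * v ^ m * u ^ n * v)⁻¹ := by simp only [pow_two]; group
  rw [hD, hC] at step
  rw [step]; group

/-- For `p,q` odd with `5 ≤ p ≤ q`, the group `Γ_{2(p+q)+1}(p,q)` is isomorphic to
`H⁺(p,q) = ⟨a,b,α,β ∣ α = a^{(p-1)/2}, β = b^{(q-1)/2},
βαbαβ(aβ)²(αb)², αβaβα(aβ)²(αb)²⟩`. -/
theorem gamma_iso_Hplus (p q : ℤ) (hp : Odd p) (hq : Odd q)
    (hp5 : 5 ≤ p) (hpq : p ≤ q) :
    Nonempty (PresentedGroup (pretzelRels p q (2 * (p + q) + 1)) ≃*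
      PresentedGroup (HplusRels p q)) := by
  have hp2 : (p + 1) / 2 = (p - 1) / 2 + 1 := by obtain ⟨k, hk⟩ := hp; omega
  have hq2 : (q + 1) / 2 = (q - 1) / 2 + 1 := by obtain ⟨k, hk⟩ := hq; omega
  -- H-side relations
  have hal : (PresentedGroup.of 2 : PresentedGroup (HplusRels p q)) = PresentedGroup.of 0 ^ ((p - 1) / 2) := by
    have h := relation_one (rels := HplusRels p q)
      (r := (FreeGroup.of 2 : FreeGroup (Fin 4))⁻¹ * FreeGroup.of 0 ^ ((p - 1) / 2)) (Set.mem_insert _ _)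
    simp only [map_mul, map_inv, map_zpow, map_pow, mk_of] at h
    exact inv_mul_eq_one.mp h
  have hbe : (PresentedGroup.of 3 : PresentedGroup (HplusRels p q)) = PresentedGroup.of 1 ^ ((q - 1) / 2) := by
    have h := relation_one (rels := HplusRels p q)
      (r := (FreeGroup.of 3 : FreeGroup (Fin 4))⁻¹ * FreeGroup.of 1 ^ ((q - 1) / 2))
      (Set.mem_insert_of_mem _ (Set.mem_insert _ _))
    simp only [map_mul, map_inv, map_zpow, map_pow, mk_of] at h
    exact inv_mul_eq_one.mp h
  have rawH3 : (PresentedGroup.of 3 : PresentedGroup (HplusRels p q)) * PresentedGroup.of 2 * PresentedGroup.of 1 * PresentedGroup.of 2 *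
      PresentedGroup.of 3 * (PresentedGroup.of 0 * PresentedGroup.of 3) ^ 2 * (PresentedGroup.of 2 * PresentedGroup.of 1) ^ 2 = 1 := by
    have h := relation_one (rels := HplusRels p q)
      (r := (FreeGroup.of 3 : FreeGroup (Fin 4)) * FreeGroup.of 2 * FreeGroup.of 1 *
        FreeGroup.of 2 * FreeGroup.of 3 *
        (FreeGroup.of 0 * FreeGroup.of 3) ^ 2 * (FreeGroup.of 2 * FreeGroup.of 1) ^ 2)
      (Set.mem_insert_of_mem _ (Set.mem_insert_of_mem _ (Set.mem_insert _ _)))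
    simp only [map_mul, map_inv, map_zpow, map_pow, mk_of] at h
    exact h
  have rawH4 : (PresentedGroup.of 2 : PresentedGroup (HplusRels p q)) * PresentedGroup.of 3 * PresentedGroup.of 0 * PresentedGroup.of 3 *
      PresentedGroup.of 2 * (PresentedGroup.of 0 * PresentedGroup.of 3) ^ 2 * (PresentedGroup.of 2 * PresentedGroup.of 1) ^ 2 = 1 := by
    have h := relation_one (rels := HplusRels p q)
      (r := (FreeGroup.of 2 : FreeGroup (Fin 4)) * FreeGroup.of 3 * FreeGroup.of 0 *
        FreeGroup.of 3 * FreeGroup.of 2 *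
        (FreeGroup.of 0 * FreeGroup.of 3) ^ 2 * (FreeGroup.of 2 * FreeGroup.of 1) ^ 2)
      (Set.mem_insert_of_mem _ (Set.mem_insert_of_mem _ (Set.mem_insert_of_mem _ rfl)))
    simp only [map_mul, map_inv, map_zpow, map_pow, mk_of] at h
    exact h
  rw [hal, hbe] at rawH3 rawH4
  have HBg : (PresentedGroup.of 0 : PresentedGroup (HplusRels p q)) * (PresentedGroup.of 1 ^ ((q - 1) / 2) * PresentedGroup.of 0 * PresentedGroup.of 1 ^ ((q - 1) / 2) * PresentedGroup.of 0 ^ ((p - 1) / 2) * PresentedGroup.of 1 * PresentedGroup.of 0 ^ ((p - 1) / 2)) * PresentedGroup.of 1 * (PresentedGroup.of 0)⁻¹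
      = PresentedGroup.of 1 ^ (-((q - 1) / 2)) * (PresentedGroup.of 1 ^ ((q - 1) / 2) * PresentedGroup.of 0 * PresentedGroup.of 1 ^ ((q - 1) / 2) * PresentedGroup.of 0 ^ ((p - 1) / 2) * PresentedGroup.of 1 * PresentedGroup.of 0 ^ ((p - 1) / 2))⁻¹ * PresentedGroup.of 1 ^ ((q - 1) / 2) :=
    eq_of_conj ((PresentedGroup.of 1 ^ ((q - 1) / 2) * PresentedGroup.of 0 ^ ((p - 1) / 2) * PresentedGroup.of 1 * PresentedGroup.of 0 ^ ((p - 1) / 2) * PresentedGroup.of 1 ^ ((q - 1) / 2))⁻¹) rawH3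
      (by simp only [pow_two]; group)
  have HCg : (PresentedGroup.of 1 : PresentedGroup (HplusRels p q))⁻¹ * PresentedGroup.of 0 * (PresentedGroup.of 1 ^ ((q - 1) / 2) * PresentedGroup.of 0 * PresentedGroup.of 1 ^ ((q - 1) / 2) * PresentedGroup.of 0 ^ ((p - 1) / 2) * PresentedGroup.of 1 * PresentedGroup.of 0 ^ ((p - 1) / 2)) * PresentedGroup.of 1
      = PresentedGroup.of 0 ^ ((p - 1) / 2) * (PresentedGroup.of 1 ^ ((q - 1) / 2) * PresentedGroup.of 0 * PresentedGroup.of 1 ^ ((q - 1) / 2) * PresentedGroup.of 0 ^ ((p - 1) / 2) * PresentedGroup.of 1 * PresentedGroup.of 0 ^ ((p - 1) / 2))⁻¹ * PresentedGroup.of 0 ^ (-((p - 1) / 2)) :=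
    eq_of_conj ((PresentedGroup.of 0 ^ ((p - 1) / 2) * PresentedGroup.of 1 ^ ((q - 1) / 2) * PresentedGroup.of 0 * PresentedGroup.of 1 ^ ((q - 1) / 2) * PresentedGroup.of 0 ^ ((p - 1) / 2) * PresentedGroup.of 1)⁻¹) rawH4
      (by simp only [pow_two]; group)
  have HAg := lemHA (PresentedGroup.of 0 : PresentedGroup (HplusRels p q)) (PresentedGroup.of 1) (PresentedGroup.of 1 ^ ((q - 1) / 2) * PresentedGroup.of 0 * PresentedGroup.of 1 ^ ((q - 1) / 2) * PresentedGroup.of 0 ^ ((p - 1) / 2) * PresentedGroup.of 1 * PresentedGroup.of 0 ^ ((p - 1) / 2)) ((p - 1) / 2) ((q - 1) / 2) HBg HCg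
  -- G-side: introduce atoms U = z*x, V = y*x
  set U : PresentedGroup (pretzelRels p q (2 * (p + q) + 1)) := PresentedGroup.of 2 * PresentedGroup.of 0 with hU
  set V : PresentedGroup (pretzelRels p q (2 * (p + q) + 1)) := PresentedGroup.of 1 * PresentedGroup.of 0 with hV
  have hy : (PresentedGroup.of 1 : PresentedGroup (pretzelRels p q (2 * (p + q) + 1))) = V * (PresentedGroup.of 0)⁻¹ := by rw [hV]; group
  have hz : (PresentedGroup.of 2 : PresentedGroup (pretzelRels p q (2 * (p + q) + 1))) = U * (PresentedGroup.of 0)⁻¹ := by rw [hU]; group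
  have GBg : U * (PresentedGroup.of 0 : PresentedGroup (pretzelRels p q (2 * (p + q) + 1)))⁻¹ * V * U⁻¹ = V ^ (-((q - 1) / 2)) * PresentedGroup.of 0 * V ^ ((q - 1) / 2) := by
    have h := relation_one (rels := pretzelRels p q (2 * (p + q) + 1))
      (r := ((FreeGroup.of 1 : FreeGroup (Fin 3)) * (FreeGroup.of 2)⁻¹)⁻¹ * FreeGroup.of 1 *
        (FreeGroup.of 1 * (FreeGroup.of 2)⁻¹) *
        ((FreeGroup.of 1 * FreeGroup.of 0) ^ (-((q - 1) / 2)) * FreeGroup.of 0 *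
          (FreeGroup.of 1 * FreeGroup.of 0) ^ ((q - 1) / 2))⁻¹)
      (Set.mem_insert_of_mem _ (Set.mem_insert _ _))
    simp only [map_mul, map_inv, map_zpow, map_pow, mk_of] at h
    rw [← hV, hy, hz] at h
    exact eq_of_conj 1 h (by group)
  have GCg : V⁻¹ * U * (PresentedGroup.of 0 : PresentedGroup (pretzelRels p q (2 * (p + q) + 1)))⁻¹ * V = U ^ ((p - 1) / 2) * PresentedGroup.of 0 * U ^ (-((p - 1) / 2)) := by
    have h := relation_one (rels := pretzelRels p q (2 * (p + q) + 1))
      (r := ((FreeGroup.of 1 : FreeGroup (Fin 3)) * (FreeGroup.of 2)⁻¹)⁻¹ * FreeGroup.of 2 *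
        (FreeGroup.of 1 * (FreeGroup.of 2)⁻¹) *
        ((FreeGroup.of 2 * FreeGroup.of 0) ^ ((p + 1) / 2) * FreeGroup.of 0 *
          (FreeGroup.of 2 * FreeGroup.of 0) ^ (-((p + 1) / 2)))⁻¹)
      (Set.mem_insert_of_mem _ (Set.mem_insert_of_mem _ (Set.mem_insert _ _)))
    simp only [map_mul, map_inv, map_zpow, map_pow, mk_of] at h
    rw [hp2, ← hU, hy, hz] at h
    exact eq_of_conj (U⁻¹) h (by group)
  have GDg : V ^ ((q - 1) / 2) * U * V ^ ((q - 1) / 2) * U ^ ((p - 1) / 2) * V * U ^ ((p - 1) / 2) = (PresentedGroup.of 0 : PresentedGroup (pretzelRels p q (2 * (p + q) + 1)))⁻¹ := by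
    have h := relation_one (rels := pretzelRels p q (2 * (p + q) + 1))
      (r := (FreeGroup.of 0 : FreeGroup (Fin 3)) ^ (2 * (p + q) + 1) *
        ((FreeGroup.of 0 : FreeGroup (Fin 3)) ^ (-2 * (p + q)) *
        (FreeGroup.of 1 * FreeGroup.of 0) ^ ((q - 1) / 2) * (FreeGroup.of 1 * (FreeGroup.of 2)⁻¹)⁻¹ *
        (FreeGroup.of 1 * FreeGroup.of 0) ^ ((q + 1) / 2) *
        (FreeGroup.of 2 * FreeGroup.of 0) ^ ((p - 1) / 2) * (FreeGroup.of 1 * (FreeGroup.of 2)⁻¹) *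
        (FreeGroup.of 2 * FreeGroup.of 0) ^ ((p + 1) / 2)))
      (Set.mem_insert_of_mem _ (Set.mem_insert_of_mem _ (Set.mem_insert_of_mem _ rfl)))
    simp only [map_mul, map_inv, map_zpow, map_pow, mk_of] at h
    rw [hp2, hq2, ← hU, ← hV, hy, hz] at h
    exact eq_of_conj ((PresentedGroup.of 0 : PresentedGroup (pretzelRels p q (2 * (p + q) + 1)))⁻¹) h (by group)
  have GDinv : (PresentedGroup.of 0 : PresentedGroup (pretzelRels p q (2 * (p + q) + 1))) = (V ^ ((q - 1) / 2) * U * V ^ ((q - 1) / 2) * U ^ ((p - 1) / 2) * V * U ^ ((p - 1) / 2))⁻¹ := by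
    rw [GDg]; group
  have W1g := lemW1 U V (PresentedGroup.of 0 : PresentedGroup (pretzelRels p q (2 * (p + q) + 1))) ((p - 1) / 2) ((q - 1) / 2) GDg GBg
  have W2g := lemW2 U V (PresentedGroup.of 0 : PresentedGroup (pretzelRels p q (2 * (p + q) + 1))) ((p - 1) / 2) ((q - 1) / 2) GDg GCg
  -- the homomorphism Γ → H⁺
  have hφ : ∀ r ∈ pretzelRels p q (2 * (p + q) + 1),
      FreeGroup.lift (![((PresentedGroup.of 1 : PresentedGroup (HplusRels p q)) ^ ((q - 1) / 2) * PresentedGroup.of 0 * PresentedGroup.of 1 ^ ((q - 1) / 2) * PresentedGroup.of 0 ^ ((p - 1) / 2) * PresentedGroup.of 1 * PresentedGroup.of 0 ^ ((p - 1) / 2))⁻¹, PresentedGroup.of 1 * (PresentedGroup.of 1 ^ ((q - 1) / 2) * PresentedGroup.of 0 * PresentedGroup.of 1 ^ ((q - 1) / 2) * PresentedGroup.of 0 ^ ((p - 1) / 2) * PresentedGroup.of 1 * PresentedGroup.of 0 ^ ((p - 1) / 2)), PresentedGroup.of 0 * (PresentedGroup.of 1 ^ ((q - 1) / 2) * PresentedGroup.of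 0 * PresentedGroup.of 1 ^ ((q - 1) / 2) * PresentedGroup.of 0 ^ ((p - 1) / 2) * PresentedGroup.of 1 * PresentedGroup.of 0 ^ ((p - 1) / 2))]) r = 1 := by
    intro r hr
    simp only [pretzelRels, Set.mem_insert_iff, Set.mem_singleton_iff] at hr
    rcases hr with rfl | rfl | rfl | rfl
    · simp only [map_mul, map_inv, map_zpow, map_pow, FreeGroup.lift_apply_of, Matrix.cons_val_zero,
        Matrix.cons_val_one, Matrix.head_cons, Matrix.cons_val_two, Matrix.tail_cons,
        Matrix.cons_val_three]
      rw [hq2]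
      exact eq_of_conj 1 HAg (by group)
    · simp only [map_mul, map_inv, map_zpow, map_pow, FreeGroup.lift_apply_of, Matrix.cons_val_zero,
        Matrix.cons_val_one, Matrix.head_cons, Matrix.cons_val_two, Matrix.tail_cons,
        Matrix.cons_val_three]
      exact eq_of_conj 1 HBg (by group)
    · simp only [map_mul, map_inv, map_zpow, map_pow, FreeGroup.lift_apply_of, Matrix.cons_val_zero,
        Matrix.cons_val_one, Matrix.head_cons, Matrix.cons_val_two, Matrix.tail_cons,
        Matrix.cons_val_three]
      rw [hp2]
      exact eq_of_conj ((PresentedGroup.of 0 : PresentedGroup (HplusRels p q))) HCg (by group)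
    · simp only [map_mul, map_inv, map_zpow, map_pow, FreeGroup.lift_apply_of, Matrix.cons_val_zero,
        Matrix.cons_val_one, Matrix.head_cons, Matrix.cons_val_two, Matrix.tail_cons,
        Matrix.cons_val_three]
      rw [hp2, hq2]
      group
  -- the homomorphism H⁺ → Γ
  have hψ : ∀ r ∈ HplusRels p q,
      FreeGroup.lift (![U, V, U ^ ((p - 1) / 2), V ^ ((q - 1) / 2)]) r = 1 := by
    intro r hr
    simp only [HplusRels, Set.mem_insert_iff, Set.mem_singleton_iff] at hr
    rcases hr with rfl | rfl | rfl | rfl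
    · simp only [map_mul, map_inv, map_zpow, map_pow, FreeGroup.lift_apply_of, Matrix.cons_val_zero,
        Matrix.cons_val_one, Matrix.head_cons, Matrix.cons_val_two, Matrix.tail_cons,
        Matrix.cons_val_three]
      group
    · simp only [map_mul, map_inv, map_zpow, map_pow, FreeGroup.lift_apply_of, Matrix.cons_val_zero,
        Matrix.cons_val_one, Matrix.head_cons, Matrix.cons_val_two, Matrix.tail_cons,
        Matrix.cons_val_three]
      group
    · simp only [map_mul, map_inv, map_zpow, map_pow, FreeGroup.lift_apply_of, Matrix.cons_val_zero,
        Matrix.cons_val_one, Matrix.head_cons, Matrix.cons_val_two, Matrix.tail_cons,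
        Matrix.cons_val_three]
      exact eq_of_conj 1 W1g (by simp only [pow_two]; group)
    · simp only [map_mul, map_inv, map_zpow, map_pow, FreeGroup.lift_apply_of, Matrix.cons_val_zero,
        Matrix.cons_val_one, Matrix.head_cons, Matrix.cons_val_two, Matrix.tail_cons,
        Matrix.cons_val_three]
      exact eq_of_conj 1 W2g (by simp only [pow_two]; group)
  refine ⟨MonoidHom.toMulEquiv (PresentedGroup.toGroup hφ) (PresentedGroup.toGroup hψ) ?_ ?_⟩
  · refine PresentedGroup.ext fun i => ?_
    fin_cases i
    · simp only [MonoidHom.comp_apply, MonoidHom.id_apply, PresentedGroup.toGroup.of,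
        map_mul, map_inv, map_zpow, map_pow, Fin.zero_eta, Fin.mk_one, Fin.reduceFinMk,
        Matrix.cons_val_zero, Matrix.cons_val_one,
        Matrix.head_cons, Matrix.cons_val_two, Matrix.tail_cons, Matrix.cons_val_three,
        mul_inv_cancel_right]
      exact eq_of_conj 1 GDinv.symm (by group)
    · simp only [MonoidHom.comp_apply, MonoidHom.id_apply, PresentedGroup.toGroup.of,
        map_mul, map_inv, map_zpow, map_pow, Fin.zero_eta, Fin.mk_one, Fin.reduceFinMk,
        Matrix.cons_val_zero, Matrix.cons_val_one,
        Matrix.head_cons, Matrix.cons_val_two, Matrix.tail_cons, Matrix.cons_val_three,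
        mul_inv_cancel_right]
      rw [GDg]
      exact hy.symm
    · simp only [MonoidHom.comp_apply, MonoidHom.id_apply, PresentedGroup.toGroup.of,
        map_mul, map_inv, map_zpow, map_pow, Fin.zero_eta, Fin.mk_one, Fin.reduceFinMk,
        Matrix.cons_val_zero, Matrix.cons_val_one,
        Matrix.head_cons, Matrix.cons_val_two, Matrix.tail_cons, Matrix.cons_val_three,
        mul_inv_cancel_right]
      rw [GDg]
      exact hz.symm
  · refine PresentedGroup.ext fun i => ?_
    fin_cases i
    · simp only [MonoidHom.comp_apply, MonoidHom.id_apply, PresentedGroup.toGroup.of,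
        map_mul, map_inv, map_zpow, map_pow, Fin.zero_eta, Fin.mk_one, Fin.reduceFinMk,
        Matrix.cons_val_zero, Matrix.cons_val_one,
        Matrix.head_cons, Matrix.cons_val_two, Matrix.tail_cons, Matrix.cons_val_three,
        mul_inv_cancel_right]
      rw [hU]
      simp only [MonoidHom.comp_apply, MonoidHom.id_apply, PresentedGroup.toGroup.of,
        map_mul, map_inv, map_zpow, map_pow, Fin.zero_eta, Fin.mk_one, Fin.reduceFinMk,
        Matrix.cons_val_zero, Matrix.cons_val_one,
        Matrix.head_cons, Matrix.cons_val_two, Matrix.tail_cons, Matrix.cons_val_three,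
        mul_inv_cancel_right]
    · simp only [MonoidHom.comp_apply, MonoidHom.id_apply, PresentedGroup.toGroup.of,
        map_mul, map_inv, map_zpow, map_pow, Fin.zero_eta, Fin.mk_one, Fin.reduceFinMk,
        Matrix.cons_val_zero, Matrix.cons_val_one,
        Matrix.head_cons, Matrix.cons_val_two, Matrix.tail_cons, Matrix.cons_val_three,
        mul_inv_cancel_right]
      rw [hV]
      simp only [MonoidHom.comp_apply, MonoidHom.id_apply, PresentedGroup.toGroup.of,
        map_mul, map_inv, map_zpow, map_pow, Fin.zero_eta, Fin.mk_one, Fin.reduceFinMk,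
        Matrix.cons_val_zero, Matrix.cons_val_one,
        Matrix.head_cons, Matrix.cons_val_two, Matrix.tail_cons, Matrix.cons_val_three,
        mul_inv_cancel_right]
    · simp only [MonoidHom.comp_apply, MonoidHom.id_apply, PresentedGroup.toGroup.of,
        map_mul, map_inv, map_zpow, map_pow, Fin.zero_eta, Fin.mk_one, Fin.reduceFinMk,
        Matrix.cons_val_zero, Matrix.cons_val_one,
        Matrix.head_cons, Matrix.cons_val_two, Matrix.tail_cons, Matrix.cons_val_three,
        mul_inv_cancel_right]
      rw [hU]
      simp only [MonoidHom.comp_apply, MonoidHom.id_apply, PresentedGroup.toGroup.of,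
        map_mul, map_inv, map_zpow, map_pow, Fin.zero_eta, Fin.mk_one, Fin.reduceFinMk,
        Matrix.cons_val_zero, Matrix.cons_val_one,
        Matrix.head_cons, Matrix.cons_val_two, Matrix.tail_cons, Matrix.cons_val_three,
        mul_inv_cancel_right]
      exact hal.symm
    · simp only [MonoidHom.comp_apply, MonoidHom.id_apply, PresentedGroup.toGroup.of,
        map_mul, map_inv, map_zpow, map_pow, Fin.zero_eta, Fin.mk_one, Fin.reduceFinMk,
        Matrix.cons_val_zero, Matrix.cons_val_one,
        Matrix.head_cons, Matrix.cons_val_two, Matrix.tail_cons, Matrix.cons_val_three,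
        mul_inv_cancel_right]
      rw [hV]
      simp only [MonoidHom.comp_apply, MonoidHom.id_apply, PresentedGroup.toGroup.of,
        map_mul, map_inv, map_zpow, map_pow, Fin.zero_eta, Fin.mk_one, Fin.reduceFinMk,
        Matrix.cons_val_zero, Matrix.cons_val_one,
        Matrix.head_cons, Matrix.cons_val_two, Matrix.tail_cons, Matrix.cons_val_three,
        mul_inv_cancel_right]
      exact hbe.symm
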